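/- (Suboptimal geometric descent shrinkage.) For any x₀ ∈ ℝ^n and any R₀² ≥ 0, with x₀⁺ := x₀ − ∇f(x₀)/β and x₀^{++} := x₀ − ∇f(x₀)/α, there exists x₁ ∈ ℝ^n such that B(x₀, R₀²) ∩ B(x₀^{++}, (1 − 1/κ)·‖∇f(x₀)‖²/α² − (2/α)·(f(x₀⁺) − f*)) ⊆ B(x₁, (1 − 1/κ)·R₀²), where κ := β/α. In particular, if x* ∈ B(x₀, R₀²) then x* ∈ B(x₁, (1 − 1/κ)·R₀²). -/

import Mathlib

/-!
With `t = 1/κ = α/β`, take `x₁ = (1 - t) x₀ + t x₀⁺⁺ = x₀ − ∇f(x₀)/β`. For every `y`,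
`‖y − x₁‖² = (1 − t)‖y − x₀‖² + t‖y − x₀⁺⁺‖² − t(1 − t)‖x₀ − x₀⁺⁺‖²`, and since
`‖x₀ − x₀⁺⁺‖² = ‖∇f(x₀)‖²/α²`, the two ball constraints bound this by
`(1 − t)R₀² − t(2/α)(f(x₀⁺) − f*)`, which is at most `(1 − t)R₀²` because `f* ≤ f(x₀⁺)`.
For the minimiser, the strong convexity lower bound at `x₀` gives
`‖x* − x₀⁺⁺‖² ≤ ‖∇f(x₀)‖²/α² − (2/α)(f(x₀) − f*)`, and the descent lemma
`f(x₀⁺) ≤ f(x₀) − ‖∇f(x₀)‖²/(2β)` turns this into the radius of the second ball.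
-/

open scoped RealInnerProductSpace

/-- The ball `B(c, r²) = {y : ‖y − c‖² ≤ r²}` (empty when `r² < 0`). -/
def B {n : ℕ} (c : EuclideanSpace ℝ (Fin n)) (r2 : ℝ) : Set (EuclideanSpace ℝ (Fin n)) :=
  {y | ‖y - c‖ ^ 2 ≤ r2}

open scoped NNReal
open Set AffineMap

section FirstOrder

variable {E : Type*} [NormedAddCommGroup E] [NormedSpace ℝ E] {f : E → ℝ}

theorem HasFDerivAt.hasDerivAt_comp_lineMap {f' : E →L[ℝ] ℝ} {x y : E} {t : ℝ}
    (hf : HasFDerivAt f f' (lineMap x y t)) :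
    HasDerivAt (fun s : ℝ => f (lineMap x y s)) (f' (y - x)) t :=
  hf.comp_hasDerivAt t hasDerivAt_lineMap

theorem ConvexOn.add_fderiv_sub_le {f' : E →L[ℝ] ℝ} {x : E} (hconv : ConvexOn ℝ univ f)
    (hf : HasFDerivAt f f' x) (y : E) : f x + f' (y - x) ≤ f y := by
  have hline : ConvexOn ℝ univ (fun t : ℝ => f (lineMap x y t)) := by
    simpa [Function.comp_def] using hconv.comp_affineMap (lineMap x y)
  rw [← lineMap_apply_zero x y (k := ℝ)] at hf
  have := hline.le_slope_of_hasDerivAt (mem_univ 0) (mem_univ 1) one_pos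
    hf.hasDerivAt_comp_lineMap
  simp only [slope_def_field, lineMap_apply_one, lineMap_apply_zero, sub_zero, div_one] at this
  linarith

theorem le_add_fderiv_sub_add_of_lipschitzWith {K : ℝ≥0} (hf : Differentiable ℝ f)
    (hK : LipschitzWith K (fderiv ℝ f)) (x y : E) :
    f y ≤ f x + fderiv ℝ f x (y - x) + K / 2 * ‖y - x‖ ^ 2 := by
  set φ : ℝ → ℝ := fun t =>
    f (lineMap x y t) - t * fderiv ℝ f x (y - x) - K / 2 * t ^ 2 * ‖y - x‖ ^ 2
  have hφ (t : ℝ) : HasDerivAt φ ((fderiv ℝ f (lineMap x y t) - fderiv ℝ f x) (y - x)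
      - K * t * ‖y - x‖ ^ 2) t := by
    refine ((((hf _).hasFDerivAt.hasDerivAt_comp_lineMap (x := x) (y := y)).sub
      ((hasDerivAt_id t).mul_const (fderiv ℝ f x (y - x)))).sub
      (((hasDerivAt_pow 2 t).const_mul (K / 2 : ℝ)).mul_const (‖y - x‖ ^ 2))).congr_deriv ?_
    rw [sub_apply]
    push_cast; ring
  have hgrowth (t : ℝ) (ht : 0 ≤ t) :
      (fderiv ℝ f (lineMap x y t) - fderiv ℝ f x) (y - x) ≤ K * t * ‖y - x‖ ^ 2 :=
    calc (fderiv ℝ f (lineMap x y t) - fderiv ℝ f x) (y - x)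
        ≤ ‖fderiv ℝ f (lineMap x y t) - fderiv ℝ f x‖ * ‖y - x‖ :=
          (Real.le_norm_self _).trans (ContinuousLinearMap.le_opNorm _ _)
      _ ≤ K * dist (lineMap x y t) x * ‖y - x‖ := by
          gcongr; rw [← dist_eq_norm]; exact hK.dist_le_mul _ _
      _ = K * t * ‖y - x‖ ^ 2 := by
          rw [dist_lineMap_left, Real.norm_of_nonneg ht, dist_eq_norm']; ring
  have hanti : AntitoneOn φ (Ici 0) := by
    refine antitoneOn_of_deriv_nonpos (convex_Ici 0)
      (fun t _ => (hφ t).continuousAt.continuousWithinAt)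
      (fun t _ => (hφ t).differentiableAt.differentiableWithinAt) fun t ht => ?_
    rw [interior_Ici] at ht
    rw [(hφ t).deriv]
    linarith [hgrowth t ht.le]
  have := hanti self_mem_Ici (mem_Ici.2 zero_le_one) zero_le_one
  simp only [φ, lineMap_apply_one, lineMap_apply_zero] at this
  linarith

end FirstOrder

section InnerProduct

open InnerProductSpace

variable {E : Type*} [NormedAddCommGroup E] [InnerProductSpace ℝ E]

theorem norm_sub_lineMap_sq (y a b : E) (t : ℝ) :
    ‖y - lineMap a b t‖ ^ 2
      = (1 - t) * ‖y - a‖ ^ 2 + t * ‖y - b‖ ^ 2 - t * (1 - t) * ‖a - b‖ ^ 2 := by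
  have hy : y - lineMap a b t = (1 - t) • (y - a) + t • (y - b) := by
    rw [lineMap_apply_module]; module
  have hab : a - b = (y - b) - (y - a) := by abel
  rw [hy, hab]
  generalize y - a = u, y - b = w
  rw [norm_add_sq_real, norm_sub_sq_real, norm_smul, norm_smul, real_inner_smul_left,
    real_inner_smul_right, mul_pow, mul_pow, Real.norm_eq_abs, Real.norm_eq_abs, sq_abs, sq_abs,
    real_inner_comm u]
  ring

variable [CompleteSpace E] {f : E → ℝ}

theorem le_add_inner_gradient_add_of_lipschitzWith {K : ℝ≥0} (hf : Differentiable ℝ f)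
    (hK : LipschitzWith K (gradient f)) (x y : E) :
    f y ≤ f x + ⟪gradient f x, y - x⟫ + K / 2 * ‖y - x‖ ^ 2 := by
  have hK' : LipschitzWith K (fderiv ℝ f) := by
    rw [← toDual_comp_gradient]
    exact (Isometry.lipschitzWith_iff K (toDual ℝ E).isometry).2 hK
  rw [inner_gradient_left]
  exact le_add_fderiv_sub_add_of_lipschitzWith hf hK' x y

theorem apply_sub_inv_smul_gradient_le {K : ℝ≥0} (hK₀ : 0 < K) (hf : Differentiable ℝ f)
    (hK : LipschitzWith K (gradient f)) (x : E) :
    f (x - (K : ℝ)⁻¹ • gradient f x) ≤ f x - ‖gradient f x‖ ^ 2 / (2 * K) := by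
  have := le_add_inner_gradient_add_of_lipschitzWith hf hK x (x - (K : ℝ)⁻¹ • gradient f x)
  rw [sub_sub_cancel_left, inner_neg_right, real_inner_smul_right, real_inner_self_eq_norm_sq,
    norm_neg, norm_smul, mul_pow, norm_inv, NNReal.norm_eq] at this
  have hK₀' : (0 : ℝ) < K := hK₀
  calc f (x - (K : ℝ)⁻¹ • gradient f x)
      ≤ f x + -((K : ℝ)⁻¹ * ‖gradient f x‖ ^ 2) + K / 2 * ((K : ℝ)⁻¹ ^ 2 * ‖gradient f x‖ ^ 2) :=
        this
    _ = f x - ‖gradient f x‖ ^ 2 / (2 * K) := by field_simp; ring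

theorem StrongConvexOn.add_inner_gradient_add_le {α : ℝ} {x : E} (hsc : StrongConvexOn univ α f)
    (hf : DifferentiableAt ℝ f x) (y : E) :
    f x + ⟪gradient f x, y - x⟫ + α / 2 * ‖y - x‖ ^ 2 ≤ f y := by
  have hderiv := hf.hasFDerivAt.sub (((hasFDerivAt_id x).norm_sq).const_mul (α / 2))
  have := (strongConvexOn_iff_convex.1 hsc).add_fderiv_sub_le hderiv y
  have hy : ‖y‖ ^ 2 = ‖x‖ ^ 2 + 2 * ⟪x, y - x⟫ + ‖y - x‖ ^ 2 := by
    rw [← norm_add_sq_real, add_sub_cancel]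
  simp only [sub_apply, smul_apply, ContinuousLinearMap.comp_apply, innerSL_apply_apply,
    ContinuousLinearMap.id_apply, id_eq, smul_eq_mul, nsmul_eq_mul] at this
  rw [hy] at this
  rw [inner_gradient_left]
  linarith

theorem StrongConvexOn.norm_sub_sub_inv_smul_gradient_sq_le {α : ℝ} {x : E} (hα : 0 < α)
    (hsc : StrongConvexOn univ α f) (hf : DifferentiableAt ℝ f x) (y : E) :
    ‖y - (x - α⁻¹ • gradient f x)‖ ^ 2 ≤ ‖gradient f x‖ ^ 2 / α ^ 2 - 2 / α * (f x - f y) := by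
  have hlow := hsc.add_inner_gradient_add_le hf y
  have hy : y - (x - α⁻¹ • gradient f x) = (y - x) + α⁻¹ • gradient f x := by abel
  rw [hy, norm_add_sq_real, real_inner_smul_right, norm_smul, mul_pow, norm_inv,
    Real.norm_of_nonneg hα.le, real_inner_comm]
  have hexpand : ‖y - x‖ ^ 2 + 2 * (α⁻¹ * ⟪gradient f x, y - x⟫) + α⁻¹ ^ 2 * ‖gradient f x‖ ^ 2
      - (‖gradient f x‖ ^ 2 / α ^ 2 - 2 / α * (f x - f y))
      = 2 / α * (f x + ⟪gradient f x, y - x⟫ + α / 2 * ‖y - x‖ ^ 2 - f y) := by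
    field_simp; ring
  linarith [mul_nonneg (by positivity : (0 : ℝ) ≤ 2 / α) (sub_nonneg.2 hlow)]

end InnerProduct

theorem B_inter_B_subset_B_lineMap {n : ℕ} {a b : EuclideanSpace ℝ (Fin n)} {r s t : ℝ}
    (ht₀ : 0 ≤ t) (ht₁ : t ≤ 1) (hs : 0 ≤ s) :
    B a r ∩ B b ((1 - t) * ‖a - b‖ ^ 2 - s) ⊆ B (lineMap a b t) ((1 - t) * r) := by
  rintro y ⟨hya, hyb⟩
  simp only [B, mem_ofPred_eq] at hya hyb ⊢
  rw [norm_sub_lineMap_sq]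
  linarith [mul_le_mul_of_nonneg_left hya (sub_nonneg.2 ht₁), mul_le_mul_of_nonneg_left hyb ht₀,
    mul_nonneg ht₀ hs]

theorem stmt_19_general (n : ℕ) (α β κ : ℝ) (hα : 0 < α) (hαβ : α ≤ β) (hκ : κ = β / α)
    (f : EuclideanSpace ℝ (Fin n) → ℝ)
    (hsc : ConvexOn ℝ Set.univ (fun z => f z - α / 2 * ‖z‖ ^ 2))
    (hf : Differentiable ℝ f)
    (hlip : LipschitzWith β.toNNReal (fun z => gradient f z))
    (xstar : EuclideanSpace ℝ (Fin n)) (hmin : IsMinOn f Set.univ xstar)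
    (x0 : EuclideanSpace ℝ (Fin n)) (R02 : ℝ) :
    ∃ x1 : EuclideanSpace ℝ (Fin n),
      (B x0 R02 ∩ B (x0 - α⁻¹ • gradient f x0)
          ((1 - 1 / κ) * ‖gradient f x0‖ ^ 2 / α ^ 2
            - 2 / α * (f (x0 - β⁻¹ • gradient f x0) - f xstar))
        ⊆ B x1 ((1 - 1 / κ) * R02))
      ∧ (xstar ∈ B x0 R02 → xstar ∈ B x1 ((1 - 1 / κ) * R02)) := by
  have hβ : 0 < β := hα.trans_le hαβ
  have hκα : 1 / κ = α / β := by rw [hκ, one_div_div]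
  set g := gradient f x0
  have hstep : ‖x0 - (x0 - α⁻¹ • g)‖ ^ 2 = ‖g‖ ^ 2 / α ^ 2 := by
    rw [sub_sub_cancel, norm_smul, mul_pow, norm_inv, Real.norm_of_nonneg hα.le]
    field_simp
  have hgap : 0 ≤ 2 / α * (f (x0 - β⁻¹ • g) - f xstar) :=
    mul_nonneg (by positivity) (sub_nonneg.2 (hmin (mem_univ _)))
  have hsub : B x0 R02 ∩ B (x0 - α⁻¹ • g)
      ((1 - 1 / κ) * ‖g‖ ^ 2 / α ^ 2 - 2 / α * (f (x0 - β⁻¹ • g) - f xstar))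
      ⊆ B (lineMap x0 (x0 - α⁻¹ • g) (1 / κ)) ((1 - 1 / κ) * R02) := by
    rw [mul_div_assoc, ← hstep, hκα]
    exact B_inter_B_subset_B_lineMap (by positivity) (div_le_one_of_le₀ hαβ hβ.le) hgap
  refine ⟨_, hsub, fun hx => hsub ⟨hx, ?_⟩⟩
  have hdesc : f (x0 - β⁻¹ • g) ≤ f x0 - ‖g‖ ^ 2 / (2 * β) := by
    simpa [Real.coe_toNNReal _ hβ.le] using
      apply_sub_inv_smul_gradient_le (Real.toNNReal_pos.2 hβ) hf hlip x0
  have hlong := (strongConvexOn_iff_convex.2 hsc).norm_sub_sub_inv_smul_gradient_sq_le hα (hf x0)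
    xstar
  have hradius : (1 - 1 / κ) * ‖g‖ ^ 2 / α ^ 2 - 2 / α * (f (x0 - β⁻¹ • g) - f xstar)
      - (‖g‖ ^ 2 / α ^ 2 - 2 / α * (f x0 - f xstar))
      = 2 / α * (f x0 - ‖g‖ ^ 2 / (2 * β) - f (x0 - β⁻¹ • g)) := by
    rw [hκα]; field_simp; ring
  show ‖xstar - (x0 - α⁻¹ • g)‖ ^ 2 ≤ _
  linarith [mul_nonneg (by positivity : (0 : ℝ) ≤ 2 / α) (sub_nonneg.2 hdesc)]

/-- suboptimal geometric descent shrinkage. With `x₀⁺ = x₀ − ∇f(x₀)/β`,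
`x₀^{++} = x₀ − ∇f(x₀)/α` and `κ = β/α`, there exists `x₁` with
`B(x₀, R₀²) ∩ B(x₀^{++}, (1 − 1/κ)‖∇f(x₀)‖²/α² − (2/α)(f(x₀⁺) − f*)) ⊆ B(x₁, (1 − 1/κ)R₀²)`;
in particular, if `x* ∈ B(x₀, R₀²)` then `x* ∈ B(x₁, (1 − 1/κ)R₀²)`. -/
theorem stmt_19 (n : ℕ) (α β κ : ℝ) (hα : 0 < α) (hαβ : α ≤ β) (hκ : κ = β / α)
    (f : EuclideanSpace ℝ (Fin n) → ℝ)
    (hsc : ConvexOn ℝ Set.univ (fun z => f z - α / 2 * ‖z‖ ^ 2))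
    (hf : Differentiable ℝ f)
    (hlip : LipschitzWith β.toNNReal (fun z => gradient f z))
    (xstar : EuclideanSpace ℝ (Fin n)) (hmin : IsMinOn f Set.univ xstar)
    (x0 : EuclideanSpace ℝ (Fin n)) (R02 : ℝ) (hR0 : 0 ≤ R02) :
    ∃ x1 : EuclideanSpace ℝ (Fin n),
      (B x0 R02 ∩ B (x0 - α⁻¹ • gradient f x0)
          ((1 - 1 / κ) * ‖gradient f x0‖ ^ 2 / α ^ 2
            - 2 / α * (f (x0 - β⁻¹ • gradient f x0) - f xstar))
        ⊆ B x1 ((1 - 1 / κ) * R02))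
      ∧ (xstar ∈ B x0 R02 → xstar ∈ B x1 ((1 - 1 / κ) * R02)) :=
  stmt_19_general n α β κ hα hαβ hκ f hsc hf hlip xstar hmin x0 R02
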